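/- arXiv:2007.04630 — 5 statements merged into one kernel-verified Lean document; each statement's English description precedes it below -/
import Mathlib

section
/- For each integer m ≥ 1 define the sawtooth function s_m : ℝ → ℝ by s_m(x) = 2^{−m} · dist(x, G_m), where G_m = {2^{1−m} k : k ∈ ℤ} and dist(x, G_m) = inf_{g ∈ G_m} |x − g|. Then for every integer m ≥ 1 and every x ∈ [0,1], |x − Σ_{i=1}^m s_i(x) − x²| ≤ 2^{−m}. -/
/-- The `m`-th sawtooth function: `s_m(x) = 2^{-m} · dist(x, G_m)` where
`G_m = {2^{1-m} k : k ∈ ℤ}`. -/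
noncomputable def sawtooth (m : ℕ) (x : ℝ) : ℝ :=
  (2 : ℝ) ^ (-(m : ℤ)) *
    Metric.infDist x {g : ℝ | ∃ k : ℤ, g = (2 : ℝ) ^ (1 - (m : ℤ)) * k}

lemma lattice_infDist (c : ℝ) (hc : 0 < c) (x : ℝ) :
    Metric.infDist x {g : ℝ | ∃ k : ℤ, g = c * k} =
      min (x - c * ⌊x / c⌋) (c * ⌊x / c⌋ + c - x) := by
  set n : ℤ := ⌊x / c⌋ with hn
  have h1 : c * (n : ℝ) ≤ x := by
    rw [mul_comm]; exact (le_div_iff₀ hc).mp (Int.floor_le (x / c))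
  have h2 : x < c * (n : ℝ) + c := by
    have := (div_lt_iff₀ hc).mp (Int.lt_floor_add_one (x / c))
    nlinarith
  have hne : ({g : ℝ | ∃ k : ℤ, g = c * k}).Nonempty := ⟨c * n, n, rfl⟩
  apply le_antisymm
  · apply le_min
    · have : Metric.infDist x {g : ℝ | ∃ k : ℤ, g = c * k} ≤ dist x (c * n) :=
        Metric.infDist_le_dist_of_mem ⟨n, rfl⟩
      rw [Real.dist_eq, abs_of_nonneg (by linarith)] at this
      exact this
    · have h3 : Metric.infDist x {g : ℝ | ∃ k : ℤ, g = c * k} ≤ dist x (c * ((n : ℝ) + 1)) := by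
        apply Metric.infDist_le_dist_of_mem
        exact ⟨n + 1, by push_cast; ring⟩
      rw [Real.dist_eq, abs_of_nonpos (by linarith)] at h3
      calc Metric.infDist x {g : ℝ | ∃ k : ℤ, g = c * k} ≤ -(x - c * ((n:ℝ)+1)) := h3
        _ = c * n + c - x := by ring
  · rw [← not_lt]
    intro hlt
    rw [Metric.infDist_lt_iff hne] at hlt
    obtain ⟨y, ⟨k, rfl⟩, hy⟩ := hlt
    rw [Real.dist_eq] at hy
    revert hy
    rw [imp_false, not_lt]
    rcases le_or_gt k n with hk | hk
    · have hk' : (k : ℝ) ≤ n := by exact_mod_cast hk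
      have : c * k ≤ c * n := by nlinarith
      calc min (x - c * n) (c * n + c - x) ≤ x - c * n := min_le_left _ _
        _ ≤ x - c * k := by linarith
        _ ≤ |x - c * k| := le_abs_self _
    · have hk' : (n : ℝ) + 1 ≤ k := by exact_mod_cast hk
      have : c * ((n:ℝ) + 1) ≤ c * k := by nlinarith
      calc min (x - c * n) (c * n + c - x) ≤ c * n + c - x := min_le_right _ _
        _ ≤ c * k - x := by linarith
        _ ≤ |x - c * k| := by rw [abs_sub_comm]; exact le_abs_self _

lemma sawtooth_eval (m : ℕ) (x : ℝ) :
    sawtooth (m + 1) x = (2 : ℝ) ^ (-(m : ℤ)) / 2 *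
      min (x - (2:ℝ) ^ (-(m:ℤ)) * ⌊x / (2:ℝ) ^ (-(m:ℤ))⌋)
          ((2:ℝ) ^ (-(m:ℤ)) * ⌊x / (2:ℝ) ^ (-(m:ℤ))⌋ + (2:ℝ) ^ (-(m:ℤ)) - x) := by
  have hc : (0:ℝ) < (2:ℝ) ^ (-(m:ℤ)) := by positivity
  have he2 : ((2:ℝ)) ^ (-(((m+1) : ℕ) : ℤ)) = (2 : ℝ) ^ (-(m : ℤ)) / 2 := by
    rw [show (-(((m+1) : ℕ) : ℤ)) = -(m:ℤ) + (-1) by push_cast; ring,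
      zpow_add₀ (by norm_num : (2:ℝ) ≠ 0), zpow_neg_one, ← div_eq_mul_inv]
  unfold sawtooth
  rw [show (1 - (((m+1) : ℕ) : ℤ)) = -(m:ℤ) by push_cast; ring,
    lattice_infDist _ hc x, he2]

lemma key_identity (x : ℝ) (h0 : 0 ≤ x) (h1 : x ≤ 1) : ∀ m : ℕ,
    x - (∑ i ∈ Finset.Icc 1 m, sawtooth i x) - x ^ 2 =
      (x - (2:ℝ) ^ (-(m:ℤ)) * ⌊x / (2:ℝ) ^ (-(m:ℤ))⌋) *
        ((2:ℝ) ^ (-(m:ℤ)) * ⌊x / (2:ℝ) ^ (-(m:ℤ))⌋ + (2:ℝ) ^ (-(m:ℤ)) - x) := by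
  intro m
  induction m with
  | zero =>
    simp only [Nat.cast_zero, neg_zero, zpow_zero, one_mul, div_one]
    rw [show Finset.Icc 1 0 = ∅ by rfl]
    simp only [Finset.sum_empty, sub_zero]
    rcases eq_or_lt_of_le h1 with h | h
    · subst h; norm_num
    · rw [Int.floor_eq_zero_iff.mpr ⟨h0, h⟩]
      push_cast; ring
  | succ m ih =>
    rw [Finset.sum_Icc_succ_top (by omega : 1 ≤ m + 1), sawtooth_eval]
    set c : ℝ := (2:ℝ) ^ (-(m:ℤ)) with hcdef
    have hc : (0:ℝ) < c := by positivity
    set n : ℤ := ⌊x / c⌋ with hn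
    have hA : (n : ℝ) ≤ x / c := Int.floor_le _
    have hB : x / c < (n : ℝ) + 1 := Int.lt_floor_add_one _
    have hlo : c * (n : ℝ) ≤ x := by
      rw [mul_comm]; exact (le_div_iff₀ hc).mp hA
    have hhi : x < c * (n : ℝ) + c := by
      have := (div_lt_iff₀ hc).mp hB; nlinarith
    have hc' : x / (c / 2) = 2 * (x / c) := by field_simp
    have hexp : ((2:ℝ)) ^ (-(((m+1) : ℕ) : ℤ)) = c / 2 := by
      rw [hcdef, show (-(((m+1) : ℕ) : ℤ)) = -(m:ℤ) + (-1) by push_cast; ring,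
        zpow_add₀ (by norm_num : (2:ℝ) ≠ 0), zpow_neg_one, ← div_eq_mul_inv]
    rw [hexp, hc']
    rcases lt_or_ge x (c * n + c / 2) with hcase | hcase
    · have hq : x / c < (n : ℝ) + 1 / 2 := by
        rw [div_lt_iff₀ hc]; nlinarith
      have hfloor : ⌊2 * (x / c)⌋ = 2 * n := by
        rw [Int.floor_eq_iff]
        push_cast
        constructor <;> linarith
      rw [hfloor]
      have hmin : min (x - c * n) (c * n + c - x) = x - c * n := by
        apply min_eq_left; linarith
      rw [hmin]
      push_cast
      linear_combination ih
    · have hq : (n : ℝ) + 1 / 2 ≤ x / c := by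
        rw [le_div_iff₀ hc]; nlinarith
      have hfloor : ⌊2 * (x / c)⌋ = 2 * n + 1 := by
        rw [Int.floor_eq_iff]
        push_cast
        constructor <;> linarith
      rw [hfloor]
      have hmin : min (x - c * n) (c * n + c - x) = c * n + c - x := by
        apply min_eq_right; linarith
      rw [hmin]
      push_cast
      linear_combination ih

/-- For every `m ≥ 1` and every `x ∈ [0,1]`,
`|x − Σ_{i=1}^m s_i(x) − x²| ≤ 2^{−m}`. -/
theorem sawtooth_sum_approx_sq (m : ℕ) (hm : 1 ≤ m) (x : ℝ)
    (hx : x ∈ Set.Icc (0 : ℝ) 1) :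
    |x - (∑ i ∈ Finset.Icc 1 m, sawtooth i x) - x ^ 2| ≤ (2 : ℝ) ^ (-(m : ℤ)) := by
  obtain ⟨h0, h1⟩ := hx
  rw [key_identity x h0 h1 m]
  set c : ℝ := (2:ℝ) ^ (-(m:ℤ)) with hcdef
  have hc : (0:ℝ) < c := by positivity
  have hc1 : c ≤ 1 := by
    calc c ≤ (2:ℝ) ^ (0:ℤ) := zpow_le_zpow_right₀ one_le_two (by omega)
      _ = 1 := by norm_num
  set n : ℤ := ⌊x / c⌋ with hn
  have hlo : c * (n : ℝ) ≤ x := by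
    rw [mul_comm]; exact (le_div_iff₀ hc).mp (Int.floor_le (x / c))
  have hhi : x < c * (n : ℝ) + c := by
    have := (div_lt_iff₀ hc).mp (Int.lt_floor_add_one (x / c))
    nlinarith
  rw [abs_of_nonneg (by nlinarith)]
  nlinarith
end

section
/- Let ε ≥ 0 and let M : ℝ × ℝ → ℝ satisfy: (i) |M(a,b) − ab| ≤ ε for all a, b ∈ [−1,1], and (ii) M(a,b) ∈ [−1,1] for all a, b ∈ [−1,1]. For i ∈ ℕ define the binary-tree product P_i : ℝ^{2^i} → ℝ recursively by P_0(x) = x_0, and P_{i+1}(x) = M(P_i(x_L), P_i(x_R)), where x_L and x_R are the first and second halves of x ∈ ℝ^{2^{i+1}}. Then for every i ∈ ℕ and every x ∈ [−1,1]^{2^i}, |P_i(x) − ∏_{j=0}^{2^i − 1} x_j| ≤ (2^i − 1) ε. -/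
/-- The binary-tree product `P_i : ℝ^{2^i} → ℝ` built from an approximate
multiplication `M`: `P_0(x) = x_0` and `P_{i+1}(x) = M(P_i(x_L), P_i(x_R))`. -/
def treeProd (M : ℝ → ℝ → ℝ) : (i : ℕ) → (Fin (2 ^ i) → ℝ) → ℝ
  | 0, x => x ⟨0, by norm_num⟩
  | i + 1, x =>
      M (treeProd M i fun j => x ⟨(j : ℕ), by
            have h1 := j.isLt
            have h2 : 2 ^ (i + 1) = 2 ^ i + 2 ^ i := by rw [pow_succ]; ring
            omega⟩)
        (treeProd M i fun j => x ⟨2 ^ i + (j : ℕ), by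
            have h1 := j.isLt
            have h2 : 2 ^ (i + 1) = 2 ^ i + 2 ^ i := by rw [pow_succ]; ring
            omega⟩)


lemma treeProd_mem (M : ℝ → ℝ → ℝ)
    (hM' : ∀ a ∈ Set.Icc (-1 : ℝ) 1, ∀ b ∈ Set.Icc (-1 : ℝ) 1, M a b ∈ Set.Icc (-1 : ℝ) 1) :
    ∀ (i : ℕ) (x : Fin (2 ^ i) → ℝ), (∀ j, x j ∈ Set.Icc (-1 : ℝ) 1) →
      treeProd M i x ∈ Set.Icc (-1 : ℝ) 1
  | 0, x, hx => hx _
  | i + 1, x, hx =>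
    hM' _ (treeProd_mem M hM' i _ (fun j => hx _)) _ (treeProd_mem M hM' i _ (fun j => hx _))

/-- If `M : ℝ × ℝ → ℝ` satisfies `|M(a,b) − ab| ≤ ε` and
`M(a,b) ∈ [−1,1]` for all `a, b ∈ [−1,1]`, then for every `i` and every
`x ∈ [−1,1]^{2^i}`, `|P_i(x) − ∏_j x_j| ≤ (2^i − 1) ε`. -/
theorem treeProd_approx (ε : ℝ) (hε : 0 ≤ ε) (M : ℝ → ℝ → ℝ)
    (hM : ∀ a ∈ Set.Icc (-1 : ℝ) 1, ∀ b ∈ Set.Icc (-1 : ℝ) 1, |M a b - a * b| ≤ ε)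
    (hM' : ∀ a ∈ Set.Icc (-1 : ℝ) 1, ∀ b ∈ Set.Icc (-1 : ℝ) 1, M a b ∈ Set.Icc (-1 : ℝ) 1)
    (i : ℕ) (x : Fin (2 ^ i) → ℝ) (hx : ∀ j, x j ∈ Set.Icc (-1 : ℝ) 1) :
    |treeProd M i x - ∏ j, x j| ≤ ((2 : ℝ) ^ i - 1) * ε := by

  induction i with
  | zero =>
    have h : (∏ j, x j) = x ⟨0, by norm_num⟩ := Fin.prod_univ_one x
    simp [treeProd, h]
  | succ i ih =>
    have h2 : 2 ^ (i + 1) = 2 ^ i + 2 ^ i := by rw [pow_succ]; ring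
    set xL : Fin (2 ^ i) → ℝ := fun j => x ⟨(j : ℕ), by have := j.isLt; omega⟩ with hxL
    set xR : Fin (2 ^ i) → ℝ := fun j => x ⟨2 ^ i + (j : ℕ), by have := j.isLt; omega⟩ with hxR
    have hxLmem : ∀ j, xL j ∈ Set.Icc (-1 : ℝ) 1 := fun j => hx _
    have hxRmem : ∀ j, xR j ∈ Set.Icc (-1 : ℝ) 1 := fun j => hx _
    have hprod : (∏ j, x j) = (∏ j, xL j) * (∏ j, xR j) := by
      rw [← Fin.prod_congr' x h2.symm, Fin.prod_univ_add]
      congr 1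
    have habsL : |∏ j, xL j| ≤ 1 := by
      rw [Finset.abs_prod]
      apply Finset.prod_le_one (fun j _ => abs_nonneg _)
      intro j _
      have := hxLmem j
      rw [abs_le]; exact ⟨this.1, this.2⟩
    have habsR : |∏ j, xR j| ≤ 1 := by
      rw [Finset.abs_prod]
      apply Finset.prod_le_one (fun j _ => abs_nonneg _)
      intro j _
      have := hxRmem j
      rw [abs_le]; exact ⟨this.1, this.2⟩
    have hPL := treeProd_mem M hM' i xL hxLmem
    have hPR := treeProd_mem M hM' i xR hxRmem
    have hPLa : |treeProd M i xL| ≤ 1 := abs_le.mpr ⟨hPL.1, hPL.2⟩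
    have ihL := ih xL hxLmem
    have ihR := ih xR hxRmem
    have hstep : treeProd M (i + 1) x = M (treeProd M i xL) (treeProd M i xR) := rfl
    have hMerr := hM _ hPL _ hPR
    rw [hstep, hprod]
    set PL := treeProd M i xL
    set PR := treeProd M i xR
    set pL := ∏ j, xL j
    set pR := ∏ j, xR j
    have key : |PL * PR - pL * pR| ≤ |PL| * |PR - pR| + |pR| * |PL - pL| := by
      have : PL * PR - pL * pR = PL * (PR - pR) + pR * (PL - pL) := by ring
      rw [this]
      calc |PL * (PR - pR) + pR * (PL - pL)| ≤ |PL * (PR - pR)| + |pR * (PL - pL)| :=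
            abs_add_le _ _
        _ = |PL| * |PR - pR| + |pR| * |PL - pL| := by rw [abs_mul, abs_mul]
      done
    have tri : |M PL PR - pL * pR| ≤ |M PL PR - PL * PR| + |PL * PR - pL * pR| :=
      abs_sub_le _ _ _
    have hb1 : |PL| * |PR - pR| ≤ 1 * (((2:ℝ) ^ i - 1) * ε) :=
      mul_le_mul hPLa ihR (abs_nonneg _) (by norm_num)
    have hb2 : |pR| * |PL - pL| ≤ 1 * (((2:ℝ) ^ i - 1) * ε) :=
      mul_le_mul habsR ihL (abs_nonneg _) (by norm_num)
    have hpow : ((2:ℝ) ^ (i+1) - 1) * ε = ε + 2 * (((2:ℝ) ^ i - 1) * ε) := by ring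
    rw [hpow]
    linarith
end

section
/- Multivariate polynomial interpolation at finitely many distinct points: let n ≥ 1 and let x_1, …, x_n be pairwise distinct points in ℝ^d, and let v_1, …, v_n be arbitrary real numbers. Then there exists a real multivariate polynomial q in d variables with total degree at most n − 1 such that q(x_i) = v_i for every i = 1, …, n. -/
open MvPolynomial Finset

/-- Multivariate polynomial interpolation at finitely many distinct
points: given `n ≥ 1` pairwise distinct points `x_1, …, x_n ∈ ℝ^d` and arbitrary values
`v_1, …, v_n ∈ ℝ`, there is a real polynomial `q` in `d` variables of total degree at most
`n − 1` with `q(x_i) = v_i` for all `i`. -/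
theorem mvPolynomial_interpolation (d n : ℕ) (hn : 1 ≤ n)
    (x : Fin n → (Fin d → ℝ)) (hx : Function.Injective x) (v : Fin n → ℝ) :
    ∃ q : MvPolynomial (Fin d) ℝ, q.totalDegree ≤ n - 1 ∧
      ∀ i, MvPolynomial.eval (x i) q = v i := by
  classical
  -- factor polynomial for pair (i, j)
  set f : Fin n → Fin n → MvPolynomial (Fin d) ℝ := fun i j =>
    if h : x i = x j then 1 else
      C (x i (Function.ne_iff.mp h).choose - x j (Function.ne_iff.mp h).choose)⁻¹ *
        (X (Function.ne_iff.mp h).choose - C (x j (Function.ne_iff.mp h).choose))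
    with hf
  have hdeg : ∀ i j, (f i j).totalDegree ≤ 1 := by
    intro i j
    rw [hf]
    dsimp only
    split
    · simp
    · refine le_trans (totalDegree_mul _ _) ?_
      simp only [totalDegree_C, zero_add]
      refine le_trans (totalDegree_sub _ _) ?_
      simp [totalDegree_X]
  have hself : ∀ i j, eval (x i) (f i j) = if x i = x j then 1 else 1 := by
    intro i j
    rw [hf]
    dsimp only
    split
    · simp
    · next h =>
      have hk := (Function.ne_iff.mp h).choose_spec
      simp [eval_mul, eval_sub, inv_mul_cancel₀ (sub_ne_zero.mpr hk)]
  have hother : ∀ i j, x i ≠ x j → eval (x j) (f i j) = 0 := by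
    intro i j h
    rw [hf]
    dsimp only
    rw [dif_neg h]
    simp
  set L : Fin n → MvPolynomial (Fin d) ℝ := fun i => ∏ j ∈ univ.erase i, f i j with hL
  refine ⟨∑ i, C (v i) * L i, ?_, ?_⟩
  · refine le_trans (totalDegree_finset_sum _ _) ?_
    apply Finset.sup_le
    intro i _
    refine le_trans (totalDegree_mul _ _) ?_
    simp only [totalDegree_C, zero_add, hL]
    refine le_trans (totalDegree_finset_prod _ _) ?_
    refine le_trans (Finset.sum_le_card_nsmul _ _ 1 fun j _ => hdeg i j) ?_
    simp [Finset.card_erase_of_mem]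
  · intro i
    have hLi : eval (x i) (L i) = 1 := by
      rw [hL]
      simp only [eval_prod]
      apply Finset.prod_eq_one
      intro j _
      rw [hself i j]; split <;> rfl
    have hLj : ∀ j, j ≠ i → eval (x i) (L j) = 0 := by
      intro j hj
      rw [hL]
      simp only [eval_prod]
      apply Finset.prod_eq_zero (Finset.mem_erase.mpr ⟨hj.symm, Finset.mem_univ i⟩)
      exact hother j i (fun h => hj (hx h))
    rw [map_sum]
    rw [Finset.sum_eq_single i]
    · simp [hLi]
    · intro j _ hj; simp [hLj j hj]
    · simp
end

section
/- ℓ¹-Lipschitz bound for one MCN block: let σ : ℝ → ℝ be ρ-Lipschitz and let Ã ∈ ℝ^{m×d_0}, A ∈ ℝ^{m×d_1}, W ∈ ℝ^{m×d_2}, L ∈ ℝ^{p×d_2} be real matrices. Define G : ℝ^{d_0} × ℝ^{d_1} × ℝ^{d_2} → ℝ^{d_0} × ℝ^{d_1} × ℝ^{d_2} × ℝ^{p} × ℝ^{m} by G(x_0, x̂, x) = (x_0, x̂, x, L x, Ã x_0 + max(σ(A x̂), W x)), where σ is applied entrywise and max is the entrywise maximum of two vectors. Then G is Lipschitz with constant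 κ = 1 + max{ρ, 2} · K with respect to the ℓ¹ norms, i.e., ‖G(z) − G(z')‖₁ ≤ (1 + max{ρ, 2} K) ‖z − z'‖₁ for all z, z', where K = max{‖Ã‖₁, ‖A‖₁, ‖[W; L]‖₁}, [W; L] ∈ ℝ^{(m+p)×d_2} is the vertical stacking of W on top of L, and ‖M‖₁ denotes the operator norm of the matrix M induced by the vector ℓ¹ norms. -/
open Matrix

/-- The ℓ¹ norm of a vector: the sum of the absolute values of its entries. -/
noncomputable def l1norm {α : Type*} [Fintype α] (v : α → ℝ) : ℝ := ∑ j, |v j|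

/-- The operator norm of a real matrix induced by the vector ℓ¹ norms:
`‖M‖₁ = sup_{x ≠ 0} ‖Mx‖₁ / ‖x‖₁`. -/
noncomputable def opL1 {α β : Type*} [Fintype α] [Fintype β] (M : Matrix α β ℝ) : ℝ :=
  sSup ((fun x : β → ℝ => l1norm (M.mulVec x) / l1norm x) '' {x | x ≠ 0})

lemma l1norm_nonneg {α : Type*} [Fintype α] (v : α → ℝ) : 0 ≤ l1norm v :=
  Finset.sum_nonneg fun _ _ => abs_nonneg _

lemma l1norm_pos {α : Type*} [Fintype α] {v : α → ℝ} (hv : v ≠ 0) : 0 < l1norm v := by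
  rcases (l1norm_nonneg v).lt_or_eq with h | h
  · exact h
  · exfalso; apply hv; funext j
    have := (Finset.sum_eq_zero_iff_of_nonneg (fun i _ => abs_nonneg (v i))).mp h.symm j
      (Finset.mem_univ j)
    simpa [abs_eq_zero] using this

lemma opL1_nonneg {α β : Type*} [Fintype α] [Fintype β] (M : Matrix α β ℝ) : 0 ≤ opL1 M := by
  apply Real.sSup_nonneg
  rintro x ⟨y, -, rfl⟩
  exact div_nonneg (l1norm_nonneg _) (l1norm_nonneg _)

lemma step1 {α β : Type*} [Fintype α] [Fintype β] (M : Matrix α β ℝ) (x : β → ℝ) :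
    l1norm (M.mulVec x) ≤ ∑ j, |x j| * (∑ i, |M i j|) := by
  calc l1norm (M.mulVec x) ≤ ∑ i, ∑ j, |M i j * x j| :=
        Finset.sum_le_sum fun i _ => Finset.abs_sum_le_sum_abs _ _
    _ = ∑ j, |x j| * (∑ i, |M i j|) := by
        rw [Finset.sum_comm]
        simp [abs_mul, Finset.mul_sum, mul_comm]

lemma l1norm_mulVec_le {α β : Type*} [Fintype α] [Fintype β] (M : Matrix α β ℝ) (x : β → ℝ) :
    l1norm (M.mulVec x) ≤ opL1 M * l1norm x := by
  classical
  have hbdd : BddAbove ((fun x : β → ℝ => l1norm (M.mulVec x) / l1norm x) '' {x | x ≠ 0}) := by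
    refine ⟨∑ j, ∑ i, |M i j|, ?_⟩
    rintro q ⟨y, hy, rfl⟩
    have hy' := l1norm_pos hy
    rw [div_le_iff₀ hy']
    calc l1norm (M.mulVec y) ≤ ∑ j, |y j| * (∑ i, |M i j|) := step1 M y
      _ ≤ ∑ j, |y j| * (∑ j', ∑ i, |M i j'|) := by
          refine Finset.sum_le_sum fun j _ => mul_le_mul_of_nonneg_left ?_ (abs_nonneg _)
          exact Finset.single_le_sum (f := fun j' => ∑ i, |M i j'|)
            (fun j' _ => Finset.sum_nonneg fun i _ => abs_nonneg _) (Finset.mem_univ j)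
      _ = (∑ j, ∑ i, |M i j|) * l1norm y := by rw [l1norm, ← Finset.sum_mul, mul_comm]
  have hcol : ∀ j : β, (∑ i, |M i j|) ≤ opL1 M := by
    intro j
    have h1 : l1norm (Pi.single j (1:ℝ)) = 1 := by
      simp [l1norm, Pi.single_apply, apply_ite abs]
    have hne : (Pi.single j (1:ℝ) : β → ℝ) ≠ 0 := by
      intro h
      have := congrFun h j
      simp at this
    have h2 : l1norm (M.mulVec (Pi.single j 1)) / l1norm (Pi.single j 1) ≤ opL1 M :=
      le_csSup hbdd ⟨Pi.single j 1, hne, rfl⟩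
    rw [h1, div_one] at h2
    calc (∑ i, |M i j|) = l1norm (M.mulVec (Pi.single j (1:ℝ))) := by
          simp [l1norm, mulVec_single]
      _ ≤ opL1 M := h2
  calc l1norm (M.mulVec x) ≤ ∑ j, |x j| * (∑ i, |M i j|) := step1 M x
    _ ≤ ∑ j, |x j| * opL1 M :=
        Finset.sum_le_sum fun j _ => mul_le_mul_of_nonneg_left (hcol j) (abs_nonneg _)
    _ = opL1 M * l1norm x := by rw [l1norm, ← Finset.sum_mul, mul_comm]

/-- One MCN block `G(x₀, x̂, x) = (x₀, x̂, x, Lx, Ãx₀ + max(σ(Ax̂), Wx))`. -/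
noncomputable def mcnBlock {m p d0 d1 d2 : ℕ} (σ : ℝ → ℝ)
    (At : Matrix (Fin m) (Fin d0) ℝ) (A : Matrix (Fin m) (Fin d1) ℝ)
    (W : Matrix (Fin m) (Fin d2) ℝ) (L : Matrix (Fin p) (Fin d2) ℝ)
    (z : (Fin d0 → ℝ) × (Fin d1 → ℝ) × (Fin d2 → ℝ)) :
    (Fin d0 → ℝ) × (Fin d1 → ℝ) × (Fin d2 → ℝ) × (Fin p → ℝ) × (Fin m → ℝ) :=
  (z.1, z.2.1, z.2.2, L.mulVec z.2.2,
    fun i => At.mulVec z.1 i + max (σ (A.mulVec z.2.1 i)) (W.mulVec z.2.2 i))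

/-- ℓ¹-Lipschitz bound for one MCN block: if `σ` is `ρ`-Lipschitz then
the block `G` is Lipschitz with constant `κ = 1 + max{ρ,2}·K` w.r.t. the ℓ¹ norms, where
`K = max{‖Ã‖₁, ‖A‖₁, ‖[W; L]‖₁}`. -/
theorem mcnBlock_l1_lipschitz (ρ : ℝ) (σ : ℝ → ℝ)
    (hσ : ∀ a b : ℝ, |σ a - σ b| ≤ ρ * |a - b|)
    (m p d0 d1 d2 : ℕ)
    (At : Matrix (Fin m) (Fin d0) ℝ) (A : Matrix (Fin m) (Fin d1) ℝ)
    (W : Matrix (Fin m) (Fin d2) ℝ) (L : Matrix (Fin p) (Fin d2) ℝ)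
    (z z' : (Fin d0 → ℝ) × (Fin d1 → ℝ) × (Fin d2 → ℝ)) :
    l1norm ((mcnBlock σ At A W L z).1 - (mcnBlock σ At A W L z').1) +
        l1norm ((mcnBlock σ At A W L z).2.1 - (mcnBlock σ At A W L z').2.1) +
        l1norm ((mcnBlock σ At A W L z).2.2.1 - (mcnBlock σ At A W L z').2.2.1) +
        l1norm ((mcnBlock σ At A W L z).2.2.2.1 - (mcnBlock σ At A W L z').2.2.2.1) +
        l1norm ((mcnBlock σ At A W L z).2.2.2.2 - (mcnBlock σ At A W L z').2.2.2.2) ≤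
      (1 + max ρ 2 * max (opL1 At) (max (opL1 A) (opL1 (Matrix.fromRows W L)))) *
        (l1norm (z.1 - z'.1) + l1norm (z.2.1 - z'.2.1) + l1norm (z.2.2 - z'.2.2)) := by
  classical
  set u0 := z.1 - z'.1 with hu0
  set u1 := z.2.1 - z'.2.1 with hu1
  set u2 := z.2.2 - z'.2.2 with hu2
  set K := max (opL1 At) (max (opL1 A) (opL1 (Matrix.fromRows W L))) with hK
  set c := max ρ 2 with hcdef
  have hK0 : 0 ≤ K := le_trans (opL1_nonneg At) (le_max_left _ _)
  have hc2 : (2:ℝ) ≤ c := le_max_right _ _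
  have hρc : ρ ≤ c := le_max_left _ _
  have e1 : (mcnBlock σ At A W L z).1 - (mcnBlock σ At A W L z').1 = u0 := rfl
  have e2 : (mcnBlock σ At A W L z).2.1 - (mcnBlock σ At A W L z').2.1 = u1 := rfl
  have e3 : (mcnBlock σ At A W L z).2.2.1 - (mcnBlock σ At A W L z').2.2.1 = u2 := rfl
  have e4 : (mcnBlock σ At A W L z).2.2.2.1 - (mcnBlock σ At A W L z').2.2.2.1
      = L.mulVec u2 := by
    show L.mulVec z.2.2 - L.mulVec z'.2.2 = _
    rw [hu2, Matrix.mulVec_sub]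
  -- pointwise bound on last component
  have hAtpt : ∀ i, At.mulVec z.1 i - At.mulVec z'.1 i = At.mulVec u0 i := by
    intro i; rw [hu0, Matrix.mulVec_sub]; rfl
  have hApt : ∀ i, A.mulVec z.2.1 i - A.mulVec z'.2.1 i = A.mulVec u1 i := by
    intro i; rw [hu1, Matrix.mulVec_sub]; rfl
  have hWpt : ∀ i, W.mulVec z.2.2 i - W.mulVec z'.2.2 i = W.mulVec u2 i := by
    intro i; rw [hu2, Matrix.mulVec_sub]; rfl
  have hlast : l1norm ((mcnBlock σ At A W L z).2.2.2.2 - (mcnBlock σ At A W L z').2.2.2.2)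
      ≤ l1norm (At.mulVec u0) + (ρ * l1norm (A.mulVec u1) + l1norm (W.mulVec u2)) := by
    have hpt : ∀ i, |((mcnBlock σ At A W L z).2.2.2.2 - (mcnBlock σ At A W L z').2.2.2.2) i|
        ≤ |At.mulVec u0 i| + (ρ * |A.mulVec u1 i| + |W.mulVec u2 i|) := by
      intro i
      show |(At.mulVec z.1 i + max (σ (A.mulVec z.2.1 i)) (W.mulVec z.2.2 i))
          - (At.mulVec z'.1 i + max (σ (A.mulVec z'.2.1 i)) (W.mulVec z'.2.2 i))| ≤ _
      have h1 : |(At.mulVec z.1 i + max (σ (A.mulVec z.2.1 i)) (W.mulVec z.2.2 i))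
          - (At.mulVec z'.1 i + max (σ (A.mulVec z'.2.1 i)) (W.mulVec z'.2.2 i))|
          ≤ |At.mulVec z.1 i - At.mulVec z'.1 i|
            + |max (σ (A.mulVec z.2.1 i)) (W.mulVec z.2.2 i)
                - max (σ (A.mulVec z'.2.1 i)) (W.mulVec z'.2.2 i)| := by
        have := abs_add_le (At.mulVec z.1 i - At.mulVec z'.1 i)
          (max (σ (A.mulVec z.2.1 i)) (W.mulVec z.2.2 i)
            - max (σ (A.mulVec z'.2.1 i)) (W.mulVec z'.2.2 i))
        calc _ = |(At.mulVec z.1 i - At.mulVec z'.1 i)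
              + (max (σ (A.mulVec z.2.1 i)) (W.mulVec z.2.2 i)
                - max (σ (A.mulVec z'.2.1 i)) (W.mulVec z'.2.2 i))| := by ring_nf
          _ ≤ _ := this
      have h2 : |max (σ (A.mulVec z.2.1 i)) (W.mulVec z.2.2 i)
            - max (σ (A.mulVec z'.2.1 i)) (W.mulVec z'.2.2 i)|
          ≤ |σ (A.mulVec z.2.1 i) - σ (A.mulVec z'.2.1 i)|
            + |W.mulVec z.2.2 i - W.mulVec z'.2.2 i| := by
        refine le_trans (abs_max_sub_max_le_max _ _ _ _) (max_le ?_ ?_)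
        · exact le_add_of_nonneg_right (abs_nonneg _)
        · exact le_add_of_nonneg_left (abs_nonneg _)
      have h3 : |σ (A.mulVec z.2.1 i) - σ (A.mulVec z'.2.1 i)| ≤ ρ * |A.mulVec u1 i| := by
        rw [← hApt i]; exact hσ _ _
      rw [hAtpt i] at h1
      rw [hWpt i] at h2
      linarith
    calc l1norm ((mcnBlock σ At A W L z).2.2.2.2 - (mcnBlock σ At A W L z').2.2.2.2)
        ≤ ∑ i, (|At.mulVec u0 i| + (ρ * |A.mulVec u1 i| + |W.mulVec u2 i|)) :=
          Finset.sum_le_sum fun i _ => hpt i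
      _ = _ := by simp [l1norm, Finset.sum_add_distrib, Finset.mul_sum]
  -- matrix norm bounds
  have hAt' : l1norm (At.mulVec u0) ≤ K * l1norm u0 :=
    le_trans (l1norm_mulVec_le At u0)
      (mul_le_mul_of_nonneg_right (le_max_left _ _) (l1norm_nonneg _))
  have hA' : l1norm (A.mulVec u1) ≤ K * l1norm u1 :=
    le_trans (l1norm_mulVec_le A u1)
      (mul_le_mul_of_nonneg_right (le_trans (le_max_left _ _) (le_max_right _ _))
        (l1norm_nonneg _))
  have hWL' : l1norm (W.mulVec u2) + l1norm (L.mulVec u2) ≤ K * l1norm u2 := by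
    have h := l1norm_mulVec_le (Matrix.fromRows W L) u2
    have hsplit : l1norm ((Matrix.fromRows W L).mulVec u2)
        = l1norm (W.mulVec u2) + l1norm (L.mulVec u2) := by
      rw [Matrix.fromRows_mulVec]
      simp [l1norm, Fintype.sum_sum_type]
    rw [hsplit] at h
    exact le_trans h (mul_le_mul_of_nonneg_right
      (le_trans (le_max_right _ _) (le_max_right _ _)) (l1norm_nonneg _))
  rw [e1, e2, e3, e4]
  have ha0 := l1norm_nonneg u0
  have ha1 := l1norm_nonneg u1
  have ha2 := l1norm_nonneg u2
  have hA0 := l1norm_nonneg (A.mulVec u1)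
  nlinarith [mul_nonneg (by linarith : (0:ℝ) ≤ c - 1) (mul_nonneg hK0 ha0),
    mul_nonneg (by linarith : (0:ℝ) ≤ c - 1) (mul_nonneg hK0 ha2),
    mul_nonneg (by linarith : (0:ℝ) ≤ c - ρ) hA0,
    mul_nonneg (by linarith : (0:ℝ) ≤ c) (sub_nonneg.mpr hA')]
end

section
/- Orthogonal projection residual decomposition: let E be a finite-dimensional real inner product space, let U and V be linear subspaces of E, and for a subspace S let P_S denote the orthogonal projection of E onto S. Let V' = {v − P_U v : v ∈ V} be the image of V under the map id − P_U (a linear subspace of E). Then for every y ∈ E, ‖y − P_{U + V} y‖² = ‖y − P_U y‖² − ‖P_{V'} y‖², where U + V denotes the subspace spanned by U and V. -/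
/-!
`V' = (id - P_U) V` is orthogonal to `U` and `U + V' = U + V`, so `P_{U+V} = P_U + P_{V'}`.
Hence `y - P_{U+V} y = a - P_{V'} a` with `a = y - P_U y` (as `P_{V'}` kills `P_U y ∈ U`),
and the identity is Pythagoras for the projection of `a` onto `V'`.
-/

namespace Submodule

variable {𝕜 E : Type*} [RCLike 𝕜] [NormedAddCommGroup E] [InnerProductSpace 𝕜 E]

theorem norm_sub_starProjection_sq (K : Submodule 𝕜 E) [K.HasOrthogonalProjection] (x : E) :
    ‖x - K.starProjection x‖ ^ 2 = ‖x‖ ^ 2 - ‖K.starProjection x‖ ^ 2 := by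
  rw [K.norm_sq_eq_add_norm_sq_starProjection x, starProjection_orthogonal_val]
  ring

theorem IsOrtho.starProjection_sub_starProjection {U W : Submodule 𝕜 E}
    [U.HasOrthogonalProjection] [W.HasOrthogonalProjection] (h : U ⟂ W) (y : E) :
    W.starProjection (y - U.starProjection y) = W.starProjection y := by
  rw [map_sub, (W.starProjection_apply_eq_zero_iff).mpr (h (U.starProjection_apply_mem y)), sub_zero]

theorem IsOrtho.starProjection_eq_add_of_sup_eq {U W K : Submodule 𝕜 E}
    [U.HasOrthogonalProjection] [W.HasOrthogonalProjection] [K.HasOrthogonalProjection]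
    (h : U ⟂ W) (hK : U ⊔ W = K) (y : E) :
    K.starProjection y = U.starProjection y + W.starProjection y := by
  subst hK
  refine eq_starProjection_of_mem_orthogonal
    (add_mem (mem_sup_left (starProjection_apply_mem _ _))
      (mem_sup_right (starProjection_apply_mem _ _))) ?_
  rw [← inf_orthogonal, mem_inf, ← sub_sub]
  refine ⟨sub_mem (U.sub_starProjection_mem_orthogonal y) (h.symm (W.starProjection_apply_mem y)), ?_⟩
  rw [sub_right_comm]
  exact sub_mem (W.sub_starProjection_mem_orthogonal y) (h (U.starProjection_apply_mem y))

theorem isOrtho_map_id_sub_starProjection (U V : Submodule 𝕜 E) [U.HasOrthogonalProjection] :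
    U ⟂ V.map (LinearMap.id - U.starProjection.toLinearMap) := by
  refine IsOrtho.symm (isOrtho_iff_le.mpr ?_)
  rintro _ ⟨v, -, rfl⟩
  exact U.sub_starProjection_mem_orthogonal v

theorem sup_map_id_sub_starProjection (U V : Submodule 𝕜 E) [U.HasOrthogonalProjection] :
    U ⊔ V.map (LinearMap.id - U.starProjection.toLinearMap) = U ⊔ V := by
  refine le_antisymm (sup_le le_sup_left ?_) (sup_le le_sup_left ?_)
  · rintro _ ⟨v, hv, rfl⟩
    exact sub_mem (mem_sup_right hv) (mem_sup_left (U.starProjection_apply_mem v))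
  · intro v hv
    rw [← sub_add_cancel v (U.starProjection v)]
    exact add_mem (mem_sup_right ⟨v, hv, rfl⟩) (mem_sup_left (U.starProjection_apply_mem v))

end Submodule

/-- Orthogonal projection residual decomposition: in a
finite-dimensional real inner product space, for subspaces `U, V` and
`V' = (id − P_U) V`, every `y` satisfies
`‖y − P_{U+V} y‖² = ‖y − P_U y‖² − ‖P_{V'} y‖²`. -/
theorem orthogonalProjection_residual_decomposition
    {E : Type*} [NormedAddCommGroup E] [InnerProductSpace ℝ E] [FiniteDimensional ℝ E]
    (U V : Submodule ℝ E) (y : E) :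
    ‖y - (Submodule.orthogonalProjectionOnto (U ⊔ V) y : E)‖ ^ 2 =
      ‖y - (Submodule.orthogonalProjectionOnto U y : E)‖ ^ 2 -
        ‖(Submodule.orthogonalProjectionOnto
            (Submodule.map
              (LinearMap.id - U.subtype.comp (Submodule.orthogonalProjectionOnto U).toLinearMap) V)
            y : E)‖ ^ 2 := by
  have hP : U.subtype ∘ₗ (U.orthogonalProjectionOnto : E →ₗ[ℝ] U) = U.starProjection := rfl
  simp only [Submodule.coe_orthogonalProjectionOnto_apply, hP]
  have hUW := U.isOrtho_map_id_sub_starProjection V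
  rw [hUW.starProjection_eq_add_of_sup_eq (U.sup_map_id_sub_starProjection V), ← sub_sub,
    ← hUW.starProjection_sub_starProjection, Submodule.norm_sub_starProjection_sq]
end
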